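/- arXiv:2501.16768 — 4 statements merged into one kernel-verified Lean document; each statement's English description precedes it below -/
import Mathlib

section
/- Let φ be a random variable on a finite set Φ with pmf p, and for λ ∈ (0,1) define the Rényi entropy of order 1-λ by H_{1-λ}(φ) = (1/λ) log Σ_{ψ∈Φ} p(ψ)^{1-λ}. For any δ > 0, the set Φ_ε = {ψ ∈ Φ : -log p(ψ) - H(φ) ≤ ε} with ε = (1/λ) log(C_λ/δ), where C_λ = e^{-λH(φ)} Σ_ψ p(ψ)^{1-λ}, has cardinality at most exp(H_{1-λ}(φ) + (1/λ) log(1/δ)). -/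
open Real Finset

/-- The typical subset `Φ_ε = {ψ | -log p ψ - H ≤ ε}` with
`ε = (1/λ) log (C_λ / δ)` has cardinality at most `exp (H_{1-λ} + (1/λ) log (1/δ))`,
where `H_{1-λ} = (1/λ) log ∑_ψ p(ψ)^{1-λ}` is the Rényi entropy of order `1-λ`. -/
theorem typical_hypothesis_set_card_le {Φ : Type*} [Fintype Φ] (p : Φ → ℝ)
    (hp : ∀ ψ, 0 < p ψ) (hsum : ∑ ψ, p ψ = 1)
    (lam δ : ℝ) (hlam0 : 0 < lam) (hlam1 : lam < 1) (hδ : 0 < δ)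
    (H : ℝ) (hH : H = ∑ ψ, Real.negMulLog (p ψ))
    (Hrenyi : ℝ) (hHrenyi : Hrenyi = (1 / lam) * Real.log (∑ ψ, p ψ ^ (1 - lam)))
    (C : ℝ) (hC : C = Real.exp (-(lam * H)) * ∑ ψ, p ψ ^ (1 - lam))
    (ε : ℝ) (hε : ε = (1 / lam) * Real.log (C / δ)) :
    (Nat.card {ψ : Φ // -Real.log (p ψ) - H ≤ ε} : ℝ)
      ≤ Real.exp (Hrenyi + (1 / lam) * Real.log (1 / δ)) := by
  have hne : Nonempty Φ := by
    by_contra h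
    rw [not_nonempty_iff] at h
    simp [Finset.univ_eq_empty] at hsum
  have hS : 0 < ∑ ψ, p ψ ^ (1 - lam) :=
    Finset.sum_pos (fun ψ _ => Real.rpow_pos_of_pos (hp ψ) _) Finset.univ_nonempty
  -- key exponent identity
  have hlogC : Real.log C = -(lam * H) + Real.log (∑ ψ, p ψ ^ (1 - lam)) := by
    rw [hC, Real.log_mul (Real.exp_ne_zero _) (ne_of_gt hS), Real.log_exp]
  have hkey : H + ε = Hrenyi + (1 / lam) * Real.log (1 / δ) := by
    rw [hε, Real.log_div (by rw [hC]; positivity) (ne_of_gt hδ), hlogC, hHrenyi,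
      Real.log_div one_ne_zero (ne_of_gt hδ), Real.log_one]
    field_simp
    ring
  set s : Finset Φ := Finset.univ.filter (fun ψ => -Real.log (p ψ) - H ≤ ε) with hs
  have hcard : (Nat.card {ψ : Φ // -Real.log (p ψ) - H ≤ ε} : ℝ) = (s.card : ℝ) := by
    rw [Nat.card_eq_fintype_card, Fintype.card_subtype]
  have hlb : ∀ ψ ∈ s, Real.exp (-(H + ε)) ≤ p ψ := by
    intro ψ hψ
    rw [hs, Finset.mem_filter] at hψ
    have h1 : -(H + ε) ≤ Real.log (p ψ) := by linarith [hψ.2]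
    calc Real.exp (-(H + ε)) ≤ Real.exp (Real.log (p ψ)) := Real.exp_le_exp.mpr h1
      _ = p ψ := Real.exp_log (hp ψ)
  have hsum_le : ∑ ψ ∈ s, p ψ ≤ 1 := by
    rw [← hsum]
    exact Finset.sum_le_sum_of_subset_of_nonneg (Finset.subset_univ s)
      (fun ψ _ _ => (hp ψ).le)
  have hmain : (s.card : ℝ) * Real.exp (-(H + ε)) ≤ 1 := by
    calc (s.card : ℝ) * Real.exp (-(H + ε)) = ∑ _ψ ∈ s, Real.exp (-(H + ε)) := by
          rw [Finset.sum_const, nsmul_eq_mul]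
      _ ≤ ∑ ψ ∈ s, p ψ := Finset.sum_le_sum hlb
      _ ≤ 1 := hsum_le
  rw [hcard, ← hkey]
  have := (le_div_iff₀ (Real.exp_pos (-(H + ε)))).mpr hmain
  rwa [one_div, ← Real.exp_neg, neg_neg] at this
end

section
/- Let X = (X^{(1)}, …, X^{(m)}), Y, and Z be discrete random variables such that, conditioned on (Y, Z), the variables X^{(1)}, …, X^{(m)} are mutually independent. Then H(Z | Y) ≤ Σ_{j=1}^m I(X^{(j)}; Z | Y) + H(Z | Y, X^{(1)}). -/
open Real Finset

/-- The pmf of a random variable `X` on a finite probability space with weights `p`. -/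
noncomputable def pmfOf {Ω α : Type*} [Fintype Ω] [DecidableEq α]
    (p : Ω → ℝ) (X : Ω → α) (a : α) : ℝ :=
  ∑ ω, if X ω = a then p ω else 0

/-- Shannon entropy (natural logarithm) of a random variable `X`. -/
noncomputable def entropy {Ω α : Type*} [Fintype Ω] [Fintype α] [DecidableEq α]
    (p : Ω → ℝ) (X : Ω → α) : ℝ :=
  ∑ a, Real.negMulLog (pmfOf p X a)

/-- Conditional entropy `H(X | Y)`. -/
noncomputable def condEntropy {Ω α β : Type*} [Fintype Ω] [Fintype α] [Fintype β]
    [DecidableEq α] [DecidableEq β] (p : Ω → ℝ) (X : Ω → α) (Y : Ω → β) : ℝ :=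
  entropy p (fun ω => (X ω, Y ω)) - entropy p Y

/-- Conditional mutual information `I(X ; Z | Y)`. -/
noncomputable def condMutualInfo {Ω α β γ : Type*} [Fintype Ω] [Fintype α] [Fintype β] [Fintype γ]
    [DecidableEq α] [DecidableEq β] [DecidableEq γ]
    (p : Ω → ℝ) (X : Ω → α) (Z : Ω → β) (Y : Ω → γ) : ℝ :=
  condEntropy p X Y + condEntropy p Z Y - condEntropy p (fun ω => (X ω, Z ω)) Y

set_option linter.unusedSectionVars false

lemma pmfOf_nonneg {Ω α : Type*} [Fintype Ω] [DecidableEq α] {p : Ω → ℝ}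
    (hp : ∀ ω, 0 ≤ p ω) (X : Ω → α) (a : α) : 0 ≤ pmfOf p X a := by
  apply Finset.sum_nonneg
  intro ω _
  split <;> simp [hp ω]

lemma entropy_comp_inj {Ω α β : Type*} [Fintype Ω] [Fintype α] [Fintype β]
    [DecidableEq α] [DecidableEq β]
    (p : Ω → ℝ) (W : Ω → α) (f : α → β) (hf : Function.Injective f) :
    entropy p (fun ω => f (W ω)) = entropy p W := by
  unfold entropy
  have h1 : ∑ b : β, Real.negMulLog (pmfOf p (fun ω => f (W ω)) b)
      = ∑ b ∈ Finset.univ.image f, Real.negMulLog (pmfOf p (fun ω => f (W ω)) b) := by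
    symm
    apply Finset.sum_subset (Finset.subset_univ _)
    intro b _ hb
    have : pmfOf p (fun ω => f (W ω)) b = 0 := by
      apply Finset.sum_eq_zero
      intro ω _
      rw [if_neg]
      intro h
      exact hb (Finset.mem_image.mpr ⟨W ω, Finset.mem_univ _, h⟩)
    simp [this]
  rw [h1, Finset.sum_image (fun a _ b _ h => hf h)]
  apply Finset.sum_congr rfl
  intro a _
  congr 1
  apply Finset.sum_congr rfl
  intro ω _
  simp [hf.eq_iff]


lemma gibbs {α β : Type*} [Fintype α] [Fintype β]
    (F : α → β → ℝ) (hF : ∀ x z, 0 ≤ F x z) :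
    Real.negMulLog (∑ x, ∑ z, F x z) + ∑ x, ∑ z, Real.negMulLog (F x z)
      ≤ (∑ x, Real.negMulLog (∑ z, F x z)) + ∑ z, Real.negMulLog (∑ x, F x z) := by
  classical
  set a : α → ℝ := fun x => ∑ z, F x z with ha
  set b : β → ℝ := fun z => ∑ x, F x z with hb
  set c : ℝ := ∑ x, ∑ z, F x z with hc
  have ha0 : ∀ x, 0 ≤ a x := fun x => Finset.sum_nonneg fun z _ => hF x z
  have hb0 : ∀ z, 0 ≤ b z := fun z => Finset.sum_nonneg fun x _ => hF x z
  have hc0 : 0 ≤ c := Finset.sum_nonneg fun x _ => ha0 x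
  have hFa : ∀ x z, F x z ≤ a x := fun x z =>
    Finset.single_le_sum (fun z _ => hF x z) (Finset.mem_univ z)
  have hFb : ∀ x z, F x z ≤ b z := fun x z =>
    Finset.single_le_sum (fun x _ => hF x z) (Finset.mem_univ x)
  have hac : ∀ x, a x ≤ c := fun x =>
    Finset.single_le_sum (fun x _ => ha0 x) (Finset.mem_univ x)
  have hab : ∑ x, a x = c := rfl
  have hbc : ∑ z, b z = c := Finset.sum_comm
  -- the key pointwise-summed inequality
  have key : ∑ x, ∑ z, (F x z * Real.log (a x) + F x z * Real.log (b z)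
      - F x z * Real.log (F x z) - F x z * Real.log c) ≤ 0 := by
    have step1 : ∑ x, ∑ z, (F x z * Real.log (a x) + F x z * Real.log (b z)
        - F x z * Real.log (F x z) - F x z * Real.log c)
        ≤ ∑ x, ∑ z, (if F x z = 0 then 0 else a x * b z / c - F x z) := by
      apply Finset.sum_le_sum
      intro x _
      apply Finset.sum_le_sum
      intro z _
      rcases eq_or_lt_of_le (hF x z) with h | h
      · simp [← h]
      · rw [if_neg (ne_of_gt h)]
        have hax : 0 < a x := lt_of_lt_of_le h (hFa x z)
        have hbz : 0 < b z := lt_of_lt_of_le h (hFb x z)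
        have hcx : 0 < c := lt_of_lt_of_le hax (hac x)
        have hlog : Real.log (a x * b z / (F x z * c)) ≤ a x * b z / (F x z * c) - 1 :=
          Real.log_le_sub_one_of_pos (by positivity)
        have h2 : F x z * Real.log (a x * b z / (F x z * c)) ≤ a x * b z / c - F x z := by
          calc F x z * Real.log (a x * b z / (F x z * c))
              ≤ F x z * (a x * b z / (F x z * c) - 1) :=
                mul_le_mul_of_nonneg_left hlog (le_of_lt h)
            _ = a x * b z / c - F x z := by field_simp
        have h3 : F x z * Real.log (a x * b z / (F x z * c))
            = F x z * Real.log (a x) + F x z * Real.log (b z)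
              - F x z * Real.log (F x z) - F x z * Real.log c := by
          rw [Real.log_div (by positivity) (by positivity),
            Real.log_mul (ne_of_gt hax) (ne_of_gt hbz),
            Real.log_mul (ne_of_gt h) (ne_of_gt hcx)]
          ring
        linarith
    refine le_trans step1 ?_
    rcases eq_or_lt_of_le hc0 with h | h
    · have hF0 : ∀ x z, F x z = 0 := by
        intro x z
        have h1 : a x = 0 := le_antisymm (by rw [h]; exact hac x) (ha0 x)
        exact le_antisymm (h1 ▸ hFa x z) (hF x z)
      simp [hF0]
    · have step2 : ∑ x, ∑ z, (if F x z = 0 then 0 else a x * b z / c - F x z)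
          ≤ ∑ x, ∑ z, (a x * b z / c - F x z) := by
        apply Finset.sum_le_sum
        intro x _
        apply Finset.sum_le_sum
        intro z _
        split
        · rename_i h0
          rw [h0]
          simp only [sub_zero]
          exact div_nonneg (mul_nonneg (ha0 x) (hb0 z)) hc0
        · exact le_rfl
      refine le_trans step2 (le_of_eq ?_)
      have hrow : ∀ x, ∑ z, (a x * b z / c - F x z) = a x - a x := by
        intro x
        rw [Finset.sum_sub_distrib]
        congr 1
        have h1 : ∑ z, a x * b z / c = (∑ z, b z) * (a x / c) := by
          rw [Finset.sum_mul]
          exact Finset.sum_congr rfl fun z _ => by ring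
        rw [h1, hbc]
        field_simp
      simp [hrow]
  -- now rewrite the entropies as double sums
  have eA : ∑ x, Real.negMulLog (a x) = ∑ x, ∑ z, (-(F x z) * Real.log (a x)) := by
    apply Finset.sum_congr rfl
    intro x _
    have h1 : ∑ z, (-(F x z) * Real.log (a x)) = (∑ z, -(F x z)) * Real.log (a x) :=
      (Finset.sum_mul _ _ _).symm
    rw [h1, Finset.sum_neg_distrib]
    simp [Real.negMulLog]
    exact Or.inl rfl
  have eB : ∑ z, Real.negMulLog (b z) = ∑ x, ∑ z, (-(F x z) * Real.log (b z)) := by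
    rw [Finset.sum_comm]
    apply Finset.sum_congr rfl
    intro z _
    have h1 : ∑ x, (-(F x z) * Real.log (b z)) = (∑ x, -(F x z)) * Real.log (b z) :=
      (Finset.sum_mul _ _ _).symm
    rw [h1, Finset.sum_neg_distrib]
    simp [Real.negMulLog]
    exact Or.inl rfl
  have eC : Real.negMulLog c = ∑ x, ∑ z, (-(F x z) * Real.log c) := by
    have h1 : ∀ x, ∑ z, (-(F x z) * Real.log c) = -(a x) * Real.log c := by
      intro x
      rw [← Finset.sum_mul, Finset.sum_neg_distrib]
    simp only [h1]
    rw [← Finset.sum_mul, Finset.sum_neg_distrib, hab]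
    simp [Real.negMulLog]
  have eF : ∑ x, ∑ z, Real.negMulLog (F x z)
      = ∑ x, ∑ z, (-(F x z) * Real.log (F x z)) := by
    simp [Real.negMulLog]
  have merge : (∑ x, ∑ z, (-(F x z) * Real.log (a x)))
      + (∑ x, ∑ z, (-(F x z) * Real.log (b z)))
      - (∑ x, ∑ z, (-(F x z) * Real.log c))
      - (∑ x, ∑ z, (-(F x z) * Real.log (F x z)))
      = -(∑ x, ∑ z, (F x z * Real.log (a x) + F x z * Real.log (b z)
          - F x z * Real.log (F x z) - F x z * Real.log c)) := by
    simp only [← Finset.sum_neg_distrib, ← Finset.sum_sub_distrib, ← Finset.sum_add_distrib]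
    apply Finset.sum_congr rfl
    intro x _
    apply Finset.sum_congr rfl
    intro z _
    ring
  rw [eC, eF, eA, eB]
  linarith [key, merge]

section Marg
variable {Ω α β γ : Type*} [Fintype Ω] [Fintype α] [Fintype β] [Fintype γ]
    [DecidableEq α] [DecidableEq β] [DecidableEq γ]
    (p : Ω → ℝ) (X : Ω → α) (Z : Ω → β) (Y : Ω → γ)

lemma marg_a (x : α) (y : γ) :
    pmfOf p (fun ω => (X ω, Y ω)) (x, y)
      = ∑ z, pmfOf p (fun ω => ((X ω, Z ω), Y ω)) ((x, z), y) := by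
  unfold pmfOf
  symm
  rw [Finset.sum_comm]
  apply Finset.sum_congr rfl
  intro ω _
  by_cases hx : X ω = x <;> by_cases hy : Y ω = y <;>
    simp [Prod.ext_iff, hx, hy, Finset.sum_ite_eq]

lemma marg_b (z : β) (y : γ) :
    pmfOf p (fun ω => (Z ω, Y ω)) (z, y)
      = ∑ x, pmfOf p (fun ω => ((X ω, Z ω), Y ω)) ((x, z), y) := by
  unfold pmfOf
  symm
  rw [Finset.sum_comm]
  apply Finset.sum_congr rfl
  intro ω _
  by_cases hz : Z ω = z <;> by_cases hy : Y ω = y <;>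
    simp [Prod.ext_iff, hz, hy, Finset.sum_ite_eq]

lemma marg_c (y : γ) :
    pmfOf p Y y = ∑ x, ∑ z, pmfOf p (fun ω => ((X ω, Z ω), Y ω)) ((x, z), y) := by
  unfold pmfOf
  symm
  have h1 : ∀ x : α, (∑ z : β, ∑ ω, if ((X ω, Z ω), Y ω) = ((x, z), y) then p ω else 0)
      = ∑ ω, ∑ z : β, if ((X ω, Z ω), Y ω) = ((x, z), y) then p ω else 0 :=
    fun x => Finset.sum_comm
  simp only [h1]
  rw [Finset.sum_comm]
  apply Finset.sum_congr rfl
  intro ω _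
  by_cases hy : Y ω = y <;>
    simp [Prod.ext_iff, hy, Finset.sum_ite_eq, ite_and]

end Marg

lemma condMutualInfo_nonneg {Ω α β γ : Type*} [Fintype Ω] [Fintype α] [Fintype β] [Fintype γ]
    [DecidableEq α] [DecidableEq β] [DecidableEq γ]
    (p : Ω → ℝ) (hp : ∀ ω, 0 ≤ p ω) (X : Ω → α) (Z : Ω → β) (Y : Ω → γ) :
    0 ≤ condMutualInfo p X Z Y := by
  classical
  have hf0 : ∀ (x : α) (z : β) (y : γ),
      0 ≤ pmfOf p (fun ω => ((X ω, Z ω), Y ω)) ((x, z), y) := fun x z y => pmfOf_nonneg hp _ _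
  have eXY : entropy p (fun ω => (X ω, Y ω))
      = ∑ y, ∑ x, Real.negMulLog (∑ z, pmfOf p (fun ω => ((X ω, Z ω), Y ω)) ((x, z), y)) := by
    unfold entropy
    rw [Fintype.sum_prod_type, Finset.sum_comm]
    exact Finset.sum_congr rfl fun y _ => Finset.sum_congr rfl fun x _ => by
      rw [marg_a p X Z Y x y]
  have eZY : entropy p (fun ω => (Z ω, Y ω))
      = ∑ y, ∑ z, Real.negMulLog (∑ x, pmfOf p (fun ω => ((X ω, Z ω), Y ω)) ((x, z), y)) := by
    unfold entropy
    rw [Fintype.sum_prod_type, Finset.sum_comm]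
    exact Finset.sum_congr rfl fun y _ => Finset.sum_congr rfl fun z _ => by
      rw [marg_b p X Z Y z y]
  have eY : entropy p Y
      = ∑ y, Real.negMulLog (∑ x, ∑ z, pmfOf p (fun ω => ((X ω, Z ω), Y ω)) ((x, z), y)) := by
    unfold entropy
    exact Finset.sum_congr rfl fun y _ => by rw [marg_c p X Z Y y]
  have eXZY : entropy p (fun ω => ((X ω, Z ω), Y ω))
      = ∑ y, ∑ x, ∑ z, Real.negMulLog (pmfOf p (fun ω => ((X ω, Z ω), Y ω)) ((x, z), y)) := by
    unfold entropy
    rw [Fintype.sum_prod_type, Finset.sum_comm]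
    apply Finset.sum_congr rfl
    intro y _
    rw [Fintype.sum_prod_type]
  have main : 0 ≤ entropy p (fun ω => (X ω, Y ω)) + entropy p (fun ω => (Z ω, Y ω))
      - entropy p (fun ω => ((X ω, Z ω), Y ω)) - entropy p Y := by
    rw [eXY, eZY, eY, eXZY]
    simp only [← Finset.sum_sub_distrib, ← Finset.sum_add_distrib]
    apply Finset.sum_nonneg
    intro y _
    have := gibbs (fun x z => pmfOf p (fun ω => ((X ω, Z ω), Y ω)) ((x, z), y))
      (fun x z => hf0 x z y)
    linarith
  unfold condMutualInfo condEntropy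
  linarith

/-- If `X⁽¹⁾, …, X⁽ᵐ⁾` are conditionally independent given `(Y, Z)`, then
`H(Z | Y) ≤ ∑_j I(X⁽ʲ⁾ ; Z | Y) + H(Z | Y, X⁽¹⁾)`.  The conditional-independence
hypothesis is stated in the product form
`P(X = x, (Y,Z) = yz) · P((Y,Z) = yz)^{m-1} = ∏_j P(X⁽ʲ⁾ = x_j, (Y,Z) = yz)`. -/
theorem condEntropy_le_sum_condMutualInfo {Ω α γy γz : Type*}
    [Fintype Ω] [Fintype α] [Fintype γy] [Fintype γz]
    [DecidableEq α] [DecidableEq γy] [DecidableEq γz]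
    (p : Ω → ℝ) (hp : ∀ ω, 0 ≤ p ω) (hsum : ∑ ω, p ω = 1)
    (m : ℕ) (hm : 0 < m) (X : Fin m → Ω → α) (Y : Ω → γy) (Z : Ω → γz)
    (hci : ∀ (x : Fin m → α) (yz : γy × γz),
      pmfOf p (fun ω => ((fun j => X j ω), (Y ω, Z ω))) (x, yz)
          * (pmfOf p (fun ω => (Y ω, Z ω)) yz) ^ (m - 1)
        = ∏ j, pmfOf p (fun ω => (X j ω, (Y ω, Z ω))) (x j, yz)) :
    condEntropy p Z Y
      ≤ (∑ j, condMutualInfo p (X j) Z Y)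
        + condEntropy p Z (fun ω => (Y ω, X ⟨0, hm⟩ ω)) := by
  classical
  set j0 : Fin m := ⟨0, hm⟩ with hj0
  have hnn : ∀ j, 0 ≤ condMutualInfo p (X j) Z Y :=
    fun j => condMutualInfo_nonneg p hp (X j) Z Y
  have hle : condMutualInfo p (X j0) Z Y ≤ ∑ j, condMutualInfo p (X j) Z Y :=
    Finset.single_le_sum (fun j _ => hnn j) (Finset.mem_univ j0)
  have e1 : entropy p (fun ω => (X j0 ω, Y ω)) = entropy p (fun ω => (Y ω, X j0 ω)) :=
    entropy_comp_inj p (fun ω => (Y ω, X j0 ω)) (fun q : γy × α => (q.2, q.1))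
      (fun q r h => by
        cases q; cases r
        simp only [Prod.mk.injEq] at h ⊢
        exact ⟨h.2, h.1⟩)
  have e2 : entropy p (fun ω => ((X j0 ω, Z ω), Y ω))
      = entropy p (fun ω => (Z ω, (Y ω, X j0 ω))) :=
    entropy_comp_inj p (fun ω => (Z ω, (Y ω, X j0 ω)))
      (fun q : γz × (γy × α) => ((q.2.2, q.1), q.2.1))
      (fun q r h => by
        obtain ⟨q1, q2, q3⟩ := q
        obtain ⟨r1, r2, r3⟩ := r
        simp only [Prod.mk.injEq] at h ⊢
        exact ⟨h.1.2, h.2, h.1.1⟩)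
  have key : condMutualInfo p (X j0) Z Y
      = condEntropy p Z Y - condEntropy p Z (fun ω => (Y ω, X j0 ω)) := by
    unfold condMutualInfo condEntropy
    rw [e1, e2]
    ring
  linarith
end

section
/- The function g(c) = −log(2 − e^{2βc})/(2βc) is monotonically increasing in c on (0, (log 2)/(2β)), for any fixed β > 0. -/
open Real

lemma aux_image : (fun t : ℝ => 2 - Real.exp t) '' Set.Ico 0 (Real.log 2) = Set.Ioc 0 1 := by
  ext y
  constructor
  · rintro ⟨t, ⟨ht0, ht2⟩, rfl⟩
    have h1 : (1 : ℝ) ≤ Real.exp t := by simpa using Real.exp_le_exp.2 ht0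
    have h2 : Real.exp t < 2 := by
      have := Real.exp_lt_exp.2 ht2
      rwa [Real.exp_log (by norm_num : (0:ℝ) < 2)] at this
    constructor
    · show (0:ℝ) < 2 - Real.exp t
      linarith
    · show 2 - Real.exp t ≤ 1
      linarith
  · rintro ⟨hy0, hy1⟩
    refine ⟨Real.log (2 - y), ⟨?_, ?_⟩, ?_⟩
    · have : (1:ℝ) ≤ 2 - y := by linarith
      simpa using Real.log_le_log (by norm_num) this
    · exact Real.log_lt_log (by linarith) (by linarith)
    · show 2 - Real.exp (Real.log (2 - y)) = y
      rw [Real.exp_log (by linarith)]; ring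

lemma aux_convex : ConvexOn ℝ (Set.Ico 0 (Real.log 2))
    (fun t : ℝ => -Real.log (2 - Real.exp t)) := by
  have hconc : ConcaveOn ℝ (Set.Ico 0 (Real.log 2)) (fun t : ℝ => 2 - Real.exp t) := by
    have h1 : ConcaveOn ℝ (Set.univ : Set ℝ) (fun t : ℝ => 2 - Real.exp t) := by
      have := (concaveOn_const (2:ℝ) convex_univ).add convexOn_exp.neg
      rw [show (fun t : ℝ => 2 - Real.exp t) = (fun x => (2:ℝ)) + -Real.exp from by
        ext t; simp [sub_eq_add_neg]]
      exact this
    exact h1.subset (Set.subset_univ _) (convex_Ico _ _)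
  have himg := aux_image
  have hg : ConvexOn ℝ ((fun t : ℝ => 2 - Real.exp t) '' Set.Ico 0 (Real.log 2))
      (fun u : ℝ => -Real.log u) := by
    rw [himg]
    exact (strictConcaveOn_log_Ioi.concaveOn.neg).subset
      (fun x hx => hx.1) (convex_Ioc _ _)
  have hanti : AntitoneOn (fun u : ℝ => -Real.log u)
      ((fun t : ℝ => 2 - Real.exp t) '' Set.Ico 0 (Real.log 2)) := by
    rw [himg]
    intro x hx y hy hxy
    simpa using Real.log_le_log hx.1 hxy
  simpa [Function.comp_def] using hg.comp_concaveOn hconc hanti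

/-- For fixed `β > 0`, the function
`g(c) = −log(2 − e^{2βc})/(2βc)` is monotonically increasing on `(0, (log 2)/(2β))`. -/
theorem fast_rate_xi_monotone (β : ℝ) (hβ : 0 < β) :
    MonotoneOn (fun c : ℝ => -Real.log (2 - Real.exp (2 * β * c)) / (2 * β * c))
      (Set.Ioo 0 (Real.log 2 / (2 * β))) := by
  have h2β : 0 < 2 * β := by linarith
  intro c1 hc1 c2 hc2 hle
  have hx : 2 * β * c1 ∈ Set.Ico 0 (Real.log 2) := by
    constructor
    · exact le_of_lt (mul_pos h2β hc1.1)
    · have := hc1.2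
      calc 2 * β * c1 < 2 * β * (Real.log 2 / (2 * β)) := by
            exact mul_lt_mul_of_pos_left this h2β
        _ = Real.log 2 := by field_simp
  have hy : 2 * β * c2 ∈ Set.Ico 0 (Real.log 2) := by
    constructor
    · exact le_of_lt (mul_pos h2β hc2.1)
    · have := hc2.2
      calc 2 * β * c2 < 2 * β * (Real.log 2 / (2 * β)) := by
            exact mul_lt_mul_of_pos_left this h2β
        _ = Real.log 2 := by field_simp
  have h0 : (0:ℝ) ∈ Set.Ico 0 (Real.log 2) := by
    exact ⟨le_refl 0, Real.log_pos (by norm_num)⟩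
  have hxne : 2 * β * c1 ≠ 0 := ne_of_gt (mul_pos h2β hc1.1)
  have hyne : 2 * β * c2 ≠ 0 := ne_of_gt (mul_pos h2β hc2.1)
  have hxy : 2 * β * c1 ≤ 2 * β * c2 := by nlinarith [hc1.1]
  have key := aux_convex.secant_mono h0 hx hy hxne hyne hxy
  simp only [Real.exp_zero] at key
  norm_num at key
  simpa using key
end

section
/- Let X = (X_1, …, X_k) follow a multinomial distribution with m trials and probabilities p = (p_1, …, p_k), and let ā_1, …, ā_k ≥ 0 be fixed with Σ_i ā_i p_i ≠ 0. Then for any ε > 0, P( Σ_{i=1}^k ā_i (p_i − X_i/m) > ε ) ≤ exp(−mε² / (2 Σ_{i=1}^k ā_i² p_i)). -/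
open Real Finset
open scoped Classical

lemma exp_neg_le_quad {x : ℝ} (hx : 0 ≤ x) : Real.exp (-x) ≤ 1 - x + x ^ 2 / 2 := by
  set f : ℝ → ℝ := fun y => 1 - y + y ^ 2 / 2 - Real.exp (-y) with hf
  have hder : ∀ y : ℝ, HasDerivAt f (-1 + y + Real.exp (-y)) y := by
    intro y
    have h1 : HasDerivAt (fun y : ℝ => 1 - y) (-1) y := by
      simpa using (hasDerivAt_id y).const_sub 1
    have h2 : HasDerivAt (fun y : ℝ => y ^ 2 / 2) y y := by
      have := (hasDerivAt_pow 2 y).div_const 2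
      simpa using this
    have h3 : HasDerivAt (fun y : ℝ => Real.exp (-y)) (-Real.exp (-y)) y := by
      simpa [Function.comp_def] using (Real.hasDerivAt_exp (-y)).comp y (hasDerivAt_neg y)
    have := (h1.add h2).sub h3
    have e : (((fun y : ℝ => 1 - y) + fun y : ℝ => y ^ 2 / 2) - fun y : ℝ => Real.exp (-y)) = f := by
      funext z; simp only [f, Pi.add_apply, Pi.sub_apply]
    rw [e, show (-1 + y - -Real.exp (-y)) = -1 + y + Real.exp (-y) by ring] at this
    exact this
  have hmono : MonotoneOn f (Set.Ici (0 : ℝ)) := by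
    apply monotoneOn_of_deriv_nonneg (convex_Ici 0)
    · exact Continuous.continuousOn (by
        continuity)
    · intro y hy
      exact (hder y).differentiableAt.differentiableWithinAt
    · intro y hy
      rw [(hder y).deriv]
      have := Real.add_one_le_exp (-y)
      linarith
  have h0 : f 0 = 0 := by simp [f]
  have := hmono (Set.self_mem_Ici) (Set.mem_Ici.2 hx) hx
  rw [h0] at this
  simp only [f] at this
  linarith

lemma mgf_bound (k : ℕ) (p : Fin k → ℝ) (hp : ∀ i, 0 ≤ p i) (hsum : ∑ i, p i = 1)
    (a : Fin k → ℝ) (ha : ∀ i, 0 ≤ a i) (lam : ℝ) (hlam : 0 ≤ lam) :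
    ∑ i, p i * Real.exp (lam * ((∑ j, a j * p j) - a i))
      ≤ Real.exp (lam ^ 2 * (∑ i, (a i) ^ 2 * p i) / 2) := by
  set μ := ∑ j, a j * p j with hμ
  set σ := ∑ i, (a i) ^ 2 * p i with hσ
  have key : ∑ i, p i * Real.exp (-(lam * a i)) ≤ 1 - lam * μ + lam ^ 2 * σ / 2 := by
    have h1 : ∀ i, p i * Real.exp (-(lam * a i))
        ≤ p i * (1 - lam * a i + (lam * a i) ^ 2 / 2) := fun i =>
      mul_le_mul_of_nonneg_left (exp_neg_le_quad (mul_nonneg hlam (ha i))) (hp i)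
    calc ∑ i, p i * Real.exp (-(lam * a i))
        ≤ ∑ i, p i * (1 - lam * a i + (lam * a i) ^ 2 / 2) := Finset.sum_le_sum fun i _ => h1 i
      _ = ∑ i, (p i - lam * (a i * p i) + lam ^ 2 * ((a i) ^ 2 * p i) / 2) := by
          apply Finset.sum_congr rfl; intro i _; ring
      _ = (∑ i, p i) - lam * μ + lam ^ 2 * σ / 2 := by
          rw [Finset.sum_add_distrib, Finset.sum_sub_distrib, ← Finset.mul_sum, ← hμ,
            ← Finset.sum_div, ← Finset.mul_sum, ← hσ]
      _ = 1 - lam * μ + lam ^ 2 * σ / 2 := by rw [hsum]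
  calc ∑ i, p i * Real.exp (lam * (μ - a i))
      = Real.exp (lam * μ) * ∑ i, p i * Real.exp (-(lam * a i)) := by
        rw [Finset.mul_sum]
        apply Finset.sum_congr rfl; intro i _
        rw [mul_sub, sub_eq_add_neg, Real.exp_add]; ring
    _ ≤ Real.exp (lam * μ) * (1 - lam * μ + lam ^ 2 * σ / 2) := by
        apply mul_le_mul_of_nonneg_left key (Real.exp_pos _).le
    _ ≤ Real.exp (lam * μ) * Real.exp (-(lam * μ) + lam ^ 2 * σ / 2) := by
        apply mul_le_mul_of_nonneg_left _ (Real.exp_pos _).le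
        have := Real.add_one_le_exp (-(lam * μ) + lam ^ 2 * σ / 2)
        linarith
    _ = Real.exp (lam ^ 2 * σ / 2) := by rw [← Real.exp_add]; ring_nf

/-- Kawaguchi et al.'s multinomial concentration inequality: Let
`X = (X₁, …, X_k)` be multinomial with `m` trials and probabilities `p`, realized as
counts `Xᵢ(ω) = #{t : ω t = i}` for `ω : Fin m → Fin k` weighted by `∏ₜ p(ω t)`.
For fixed `āᵢ ≥ 0` with `∑ āᵢ pᵢ ≠ 0` and any `ε > 0`,
`P(∑ᵢ āᵢ(pᵢ − Xᵢ/m) > ε) ≤ exp(−mε² / (2 ∑ᵢ āᵢ² pᵢ))`. -/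
theorem multinomial_concentration (k m : ℕ) (hm : 0 < m)
    (p : Fin k → ℝ) (hp : ∀ i, 0 ≤ p i) (hsum : ∑ i, p i = 1)
    (a : Fin k → ℝ) (ha : ∀ i, 0 ≤ a i) (hap : (∑ i, a i * p i) ≠ 0)
    (ε : ℝ) (hε : 0 < ε) :
    (∑ ω : Fin m → Fin k,
        if ε < ∑ i, a i * (p i - ((Finset.univ.filter fun t => ω t = i).card : ℝ) / m)
        then ∏ t, p (ω t) else 0)
      ≤ Real.exp (-((m : ℝ) * ε ^ 2) / (2 * ∑ i, (a i) ^ 2 * p i)) := by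
  set μ := ∑ j, a j * p j with hμ
  set σ := ∑ i, (a i) ^ 2 * p i with hσ
  have hm' : (0 : ℝ) < m := Nat.cast_pos.2 hm
  -- σ > 0
  have hσpos : 0 < σ := by
    obtain ⟨i, _, hi⟩ := Finset.exists_ne_zero_of_sum_ne_zero hap
    have hai : 0 < a i := lt_of_le_of_ne (ha i) (by rintro h; exact hi (by rw [← h]; ring))
    have hpi : 0 < p i := lt_of_le_of_ne (hp i) (by rintro h; exact hi (by rw [← h]; ring))
    exact Finset.sum_pos' (fun j _ => mul_nonneg (sq_nonneg _) (hp j))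
      ⟨i, Finset.mem_univ i, mul_pos (pow_pos hai 2) hpi⟩
  set lam := ε / σ with hlam
  have hlampos : 0 < lam := div_pos hε hσpos
  -- fiberwise identity
  have hfib : ∀ ω : Fin m → Fin k,
      ∑ i, (((Finset.univ.filter fun t => ω t = i).card : ℝ)) * a i = ∑ t, a (ω t) := by
    intro ω
    have := Finset.sum_fiberwise_eq_sum_filter' (univ : Finset (Fin m)) (univ : Finset (Fin k)) ω a
    simp only [Finset.mem_univ, Finset.filter_true] at this
    rw [← this]
    apply Finset.sum_congr rfl; intro i _
    rw [Finset.sum_const, nsmul_eq_mul]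
  -- condition translation
  have hcond : ∀ ω : Fin m → Fin k,
      (∑ i, a i * (p i - ((Finset.univ.filter fun t => ω t = i).card : ℝ) / m))
        = ((∑ t, (μ - a (ω t))) / m) := by
    intro ω
    have hms : ∑ t : Fin m, (μ - a (ω t)) = m * μ - ∑ t, a (ω t) := by
      rw [Finset.sum_sub_distrib, Finset.sum_const, nsmul_eq_mul, Finset.card_univ,
        Fintype.card_fin]
    rw [hms, ← hfib ω, hμ, Finset.mul_sum, ← Finset.sum_sub_distrib, Finset.sum_div]
    apply Finset.sum_congr rfl; intro i _
    field_simp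
  calc (∑ ω : Fin m → Fin k,
        if ε < ∑ i, a i * (p i - ((Finset.univ.filter fun t => ω t = i).card : ℝ) / m)
        then ∏ t, p (ω t) else 0)
      ≤ ∑ ω : Fin m → Fin k,
          (∏ t, p (ω t)) * Real.exp (lam * ((∑ t, (μ - a (ω t))) - m * ε)) := by
        apply Finset.sum_le_sum; intro ω _
        have hprod : 0 ≤ ∏ t, p (ω t) := Finset.prod_nonneg fun t _ => hp (ω t)
        split_ifs with h
        · have h2 : (m : ℝ) * ε < ∑ t, (μ - a (ω t)) := by
            rw [hcond ω] at h
            calc (m : ℝ) * ε < m * ((∑ t, (μ - a (ω t))) / m) := by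
                  exact (mul_lt_mul_iff_right₀ hm').2 h
              _ = ∑ t, (μ - a (ω t)) := by field_simp
          have : (1 : ℝ) ≤ Real.exp (lam * ((∑ t, (μ - a (ω t))) - m * ε)) := by
            rw [← Real.exp_zero]
            apply Real.exp_le_exp.2
            have : 0 < (∑ t, (μ - a (ω t))) - m * ε := by linarith
            positivity
          nlinarith [this, hprod]
        · positivity
    _ = Real.exp (-(lam * m * ε)) *
          ∑ ω : Fin m → Fin k, ∏ t, (p (ω t) * Real.exp (lam * (μ - a (ω t)))) := by
        rw [Finset.mul_sum]
        apply Finset.sum_congr rfl; intro ω _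
        rw [Finset.prod_mul_distrib, ← Real.exp_sum]
        have heq : lam * ((∑ t, (μ - a (ω t))) - m * ε)
            = -(lam * m * ε) + ∑ t, lam * (μ - a (ω t)) := by
          rw [← Finset.mul_sum]; ring
        rw [heq, Real.exp_add]; ring
    _ = Real.exp (-(lam * m * ε)) * (∑ i, p i * Real.exp (lam * (μ - a i))) ^ m := by
        rw [Fintype.sum_pow]
    _ ≤ Real.exp (-(lam * m * ε)) * (Real.exp (lam ^ 2 * σ / 2)) ^ m := by
        apply mul_le_mul_of_nonneg_left _ (Real.exp_pos _).le
        apply pow_le_pow_left₀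
        · exact Finset.sum_nonneg fun i _ => mul_nonneg (hp i) (Real.exp_pos _).le
        · exact mgf_bound k p hp hsum a ha lam hlampos.le
    _ = Real.exp (-((m : ℝ) * ε ^ 2) / (2 * σ)) := by
        rw [← Real.exp_nat_mul, ← Real.exp_add]
        congr 1
        rw [hlam]
        field_simp
        ring
end
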